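/- arXiv:2602.23907 — 8 statements merged into one kernel-verified Lean document; each statement's English description precedes it below -/
import Mathlib

section
/- For a finite set S with |S| = s ≥ 1 and a non-negative integer t, there exists a Bondy system 𝒜 on S with |𝒜| = t if and only if 0 ≤ t ≤ 2^(s-1). -/
def IsBondy {α : Type*} [DecidableEq α] (S : Finset α) (𝒜 : Finset (Finset α)) : Prop :=
  ∃ a ∈ S, ∀ A ∈ 𝒜, insert a A ∈ 𝒜 → a ∈ A

/-!
Erasing the distinguished point `a` of a Bondy system `𝒜` is injective on `𝒜`: if `A` and `B` agree
off `a` and `a ∈ A`, then `A = insert a B`, so the Bondy condition forces `a ∈ B` and hence `A = B`.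
This embeds `𝒜` into the subsets of `S \ {a}`, giving `|𝒜| ≤ 2 ^ (s - 1)`. Conversely every family of
subsets of `S \ {a}` is Bondy, because `insert a A` never belongs to it.
-/

open Finset

section

variable {α : Type*} [DecidableEq α]

theorem Finset.eq_of_erase_eq_of_mem_iff {a : α} {A B : Finset α} (h : A.erase a = B.erase a)
    (ha : a ∈ A ↔ a ∈ B) : A = B := by
  ext x
  by_cases hx : x = a
  · subst hx
    exact ha
  · simpa [hx] using congrArg (x ∈ ·) h

theorem Finset.insert_eq_of_erase_eq {a : α} {A B : Finset α} (h : A.erase a = B.erase a)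
    (ha : a ∈ A) : insert a B = A :=
  eq_of_erase_eq_of_mem_iff (by rw [erase_insert_eq_erase, h]) (iff_of_true (mem_insert_self a B) ha)

theorem injOn_erase_of_forall_insert_mem_imp_mem {𝒜 : Finset (Finset α)} {a : α}
    (h : ∀ A ∈ 𝒜, insert a A ∈ 𝒜 → a ∈ A) : Set.InjOn (fun A : Finset α => A.erase a) 𝒜 := by
  intro A hA B hB hAB
  refine eq_of_erase_eq_of_mem_iff hAB ⟨fun haA => h B hB ?_, fun haB => h A hA ?_⟩
  · rwa [insert_eq_of_erase_eq hAB haA]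
  · rwa [insert_eq_of_erase_eq hAB.symm haB]

theorem IsBondy.card_le {S : Finset α} {𝒜 : Finset (Finset α)} (hsub : ∀ A ∈ 𝒜, A ⊆ S)
    (h𝒜 : IsBondy S 𝒜) : 𝒜.card ≤ 2 ^ (S.card - 1) := by
  obtain ⟨a, haS, hins⟩ := h𝒜
  calc 𝒜.card ≤ (S.erase a).powerset.card :=
        card_le_card_of_injOn (fun A => A.erase a)
          (fun A hA => mem_powerset.2 (erase_subset_erase a (hsub A hA)))
          (injOn_erase_of_forall_insert_mem_imp_mem hins)
    _ = 2 ^ (S.card - 1) := by rw [card_powerset, card_erase_of_mem haS]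

theorem isBondy_of_subset_powerset_erase {S : Finset α} {𝒜 : Finset (Finset α)} {a : α}
    (haS : a ∈ S) (h𝒜 : 𝒜 ⊆ (S.erase a).powerset) : IsBondy S 𝒜 :=
  ⟨a, haS, fun A _ hins =>
    absurd (mem_powerset.1 (h𝒜 hins) (mem_insert_self a A)) (notMem_erase a S)⟩

end

theorem bondy_card_iff {α : Type*} [DecidableEq α] (S : Finset α)
    (hs : 1 ≤ S.card) (t : ℕ) :
    (∃ 𝒜 : Finset (Finset α), (∀ A ∈ 𝒜, A ⊆ S) ∧ IsBondy S 𝒜 ∧ 𝒜.card = t) ↔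
      t ≤ 2 ^ (S.card - 1) := by
  constructor
  · rintro ⟨𝒜, hsub, h𝒜, rfl⟩
    exact h𝒜.card_le hsub
  · intro ht
    obtain ⟨a, haS⟩ := card_pos.1 hs
    have ht' : t ≤ (S.erase a).powerset.card := by rwa [card_powerset, card_erase_of_mem haS]
    obtain ⟨𝒜, h𝒜, rfl⟩ := exists_subset_card_eq ht'
    exact ⟨𝒜, fun A hA => (mem_powerset.1 (h𝒜 hA)).trans (erase_subset a S),
      isBondy_of_subset_powerset_erase haS h𝒜, rfl⟩
end

section
/- Every non-Bondy system 𝒜 on a finite set S with |S| = s satisfies |𝒜| ≥ s + 1. -/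
lemma nonBondy_aux {α : Type*} [DecidableEq α] :
    ∀ (n : ℕ) (S : Finset α) (𝒜 : Finset (Finset α)), S.card = n → 1 ≤ n →
      (∀ A ∈ 𝒜, A ⊆ S) → (∀ a ∈ S, ∃ A ∈ 𝒜, insert a A ∈ 𝒜 ∧ a ∉ A) →
      n + 1 ≤ 𝒜.card := by
  intro n
  induction n with
  | zero => intro S 𝒜 _ h; omega
  | succ n ih =>
    intro S 𝒜 hcard _ hsub hw
    obtain ⟨a, ha⟩ := Finset.card_pos.mp (by omega : 0 < S.card)
    obtain ⟨A, hA, hiA, haA⟩ := hw a ha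
    have hAne : A ≠ insert a A := by
      intro h; exact haA (h ▸ Finset.mem_insert_self a A)
    by_cases hn : n = 0
    · subst hn
      exact Finset.one_lt_card.mpr ⟨A, hA, insert a A, hiA, hAne⟩
    · set 𝒜' := 𝒜.image (fun B => B.erase a) with h𝒜'
      have hsub' : ∀ C ∈ 𝒜', C ⊆ S.erase a := by
        intro C hC
        obtain ⟨B, hB, rfl⟩ := Finset.mem_image.mp hC
        exact Finset.erase_subset_erase a (hsub B hB)
      have hw' : ∀ b ∈ S.erase a, ∃ C ∈ 𝒜', insert b C ∈ 𝒜' ∧ b ∉ C := by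
        intro b hb
        obtain ⟨hba, hbS⟩ := Finset.mem_erase.mp hb
        obtain ⟨B, hB, hiB, hbB⟩ := hw b hbS
        refine ⟨B.erase a, Finset.mem_image_of_mem _ hB, ?_, ?_⟩
        · have : insert b (B.erase a) = (insert b B).erase a := by
            rw [Finset.erase_insert_of_ne hba]
          rw [this]
          exact Finset.mem_image_of_mem _ hiB
        · intro hmem; exact hbB (Finset.mem_of_mem_erase hmem)
      have h1 : n + 1 ≤ 𝒜'.card := by
        apply ih (S.erase a) 𝒜' _ (by omega) hsub' hw'
        rw [Finset.card_erase_of_mem ha, hcard]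
        omega
      have hss : 𝒜' ⊆ (𝒜.erase (insert a A)).image (fun B => B.erase a) := by
        intro C hC
        obtain ⟨B, hB, rfl⟩ := Finset.mem_image.mp hC
        by_cases hBeq : B = insert a A
        · subst hBeq
          refine Finset.mem_image.mpr ⟨A, Finset.mem_erase.mpr ⟨hAne, hA⟩, ?_⟩
          rw [Finset.erase_insert haA, Finset.erase_eq_of_notMem haA]
        · exact Finset.mem_image_of_mem _ (Finset.mem_erase.mpr ⟨hBeq, hB⟩)
      have h2 : 𝒜'.card ≤ ((𝒜.erase (insert a A)).image (fun B => B.erase a)).card :=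
        Finset.card_le_card hss
      have h3 := Finset.card_image_le (s := 𝒜.erase (insert a A)) (f := fun B => B.erase a)
      have h4 : (𝒜.erase (insert a A)).card = 𝒜.card - 1 :=
        Finset.card_erase_of_mem hiA
      have h5 : 1 ≤ 𝒜.card := Finset.card_pos.mpr ⟨A, hA⟩
      omega

theorem nonBondy_card_ge {α : Type*} [DecidableEq α] (S : Finset α)
    (𝒜 : Finset (Finset α)) (hs : 1 ≤ S.card) (hsub : ∀ A ∈ 𝒜, A ⊆ S)
    (hnb : ¬ IsBondy S 𝒜) :
    S.card + 1 ≤ 𝒜.card := by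
  unfold IsBondy at hnb
  push_neg at hnb
  exact nonBondy_aux S.card S 𝒜 rfl hs hsub hnb
end

section
/- For a finite set S with |S| = s ≥ 1 and a non-negative integer t, there exists a non-Bondy system 𝒜 on S with |𝒜| = t if and only if s + 1 ≤ t ≤ 2^s. -/
/-!
Erasing a point `a` from every member of a non-Bondy system on `S` gives a non-Bondy system on
`S \ {a}`, and it merges the two members `A` and `A ∪ {a}` that witness `a`; by induction on `S`
a nonempty non-Bondy system has at least `|S| + 1` members. Conversely `∅` together with all
singletons of `S` is non-Bondy with exactly `|S| + 1` members, and being non-Bondy survives adding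
further subsets of `S`, up to all `2 ^ |S|` of them.
-/

open Finset

namespace IsBondy

variable {α : Type*} [DecidableEq α] {S : Finset α} {𝒜 ℬ : Finset (Finset α)}

theorem not_iff : ¬ IsBondy S 𝒜 ↔ ∀ a ∈ S, ∃ A ∈ 𝒜, insert a A ∈ 𝒜 ∧ a ∉ A := by
  simp only [IsBondy, not_exists, not_and, not_forall, exists_prop]

theorem nonempty_of_not (hS : S.Nonempty) (h : ¬ IsBondy S 𝒜) : 𝒜.Nonempty := by
  obtain ⟨a, ha⟩ := hS
  obtain ⟨A, hA, -⟩ := not_iff.1 h a ha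
  exact ⟨A, hA⟩

theorem not_of_subset (h𝒜ℬ : 𝒜 ⊆ ℬ) (h : ¬ IsBondy S 𝒜) : ¬ IsBondy S ℬ := by
  rw [not_iff] at h ⊢
  intro a ha
  obtain ⟨A, hA, hAa, haA⟩ := h a ha
  exact ⟨A, h𝒜ℬ hA, h𝒜ℬ hAa, haA⟩

theorem not_image_erase (a : α) (h : ¬ IsBondy S 𝒜) :
    ¬ IsBondy (S.erase a) (𝒜.image (·.erase a)) := by
  rw [not_iff] at h ⊢
  intro b hb
  obtain ⟨hba, hbS⟩ := mem_erase.1 hb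
  obtain ⟨B, hB, hBb, hbB⟩ := h b hbS
  refine ⟨B.erase a, mem_image_of_mem _ hB, ?_, fun hb' => hbB (mem_of_mem_erase hb')⟩
  rw [← erase_insert_of_ne hba]
  exact mem_image_of_mem _ hBb

theorem card_image_erase_lt {a : α} {A : Finset α} (hA : A ∈ 𝒜) (hAa : insert a A ∈ 𝒜)
    (haA : a ∉ A) : (𝒜.image (·.erase a)).card < 𝒜.card := by
  refine lt_of_le_of_ne card_image_le fun heq => ?_
  have hA_eq : A = insert a A :=
    card_image_iff.1 heq hA hAa (by simp only [erase_insert_eq_erase, erase_eq_of_notMem haA])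
  exact haA (hA_eq ▸ mem_insert_self a A)

theorem card_add_one_le_card_of_not (h𝒜 : 𝒜.Nonempty) (h : ¬ IsBondy S 𝒜) :
    S.card + 1 ≤ 𝒜.card := by
  induction S using Finset.induction_on generalizing 𝒜 with
  | empty => simpa using h𝒜.card_pos
  | @insert a S haS ih =>
    obtain ⟨A, hA, hAa, haA⟩ := not_iff.1 h a (mem_insert_self a S)
    have h' : ¬ IsBondy S (𝒜.image (·.erase a)) := by
      simpa only [erase_insert haS] using not_image_erase a h
    have hS_le := ih (h𝒜.image _) h'
    have h_lt := card_image_erase_lt hA hAa haA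
    rw [card_insert_of_notMem haS]
    omega

theorem not_insert_empty_powersetCard_one : ¬ IsBondy S (insert ∅ (S.powersetCard 1)) :=
  not_iff.2 fun a ha => ⟨∅, mem_insert_self _ _,
    mem_insert_of_mem (mem_powersetCard.2 ⟨singleton_subset_iff.2 ha, card_singleton a⟩),
    notMem_empty a⟩

end IsBondy

theorem Finset.card_insert_empty_powersetCard_one {α : Type*} [DecidableEq α] (S : Finset α) :
    (insert ∅ (S.powersetCard 1)).card = S.card + 1 := by
  rw [card_insert_of_notMem (by simp), card_powersetCard, Nat.choose_one_right]

theorem nonBondy_card_iff {α : Type*} [DecidableEq α] (S : Finset α)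
    (hs : 1 ≤ S.card) (t : ℕ) :
    (∃ 𝒜 : Finset (Finset α), (∀ A ∈ 𝒜, A ⊆ S) ∧ ¬ IsBondy S 𝒜 ∧ 𝒜.card = t) ↔
      S.card + 1 ≤ t ∧ t ≤ 2 ^ S.card := by
  constructor
  · rintro ⟨𝒜, hsub, hnb, rfl⟩
    have h𝒜 : 𝒜 ⊆ S.powerset := fun A hA => mem_powerset.2 (hsub A hA)
    exact ⟨IsBondy.card_add_one_le_card_of_not (IsBondy.nonempty_of_not (card_pos.1 hs) hnb) hnb,
      card_powerset S ▸ card_le_card h𝒜⟩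
  · rintro ⟨hlo, hhi⟩
    have hstar : insert ∅ (S.powersetCard 1) ⊆ S.powerset :=
      insert_subset (empty_mem_powerset S) fun A hA => mem_powerset.2 (mem_powersetCard.1 hA).1
    obtain ⟨𝒜, hstar𝒜, h𝒜, rfl⟩ := exists_subsuperset_card_eq hstar
      (S.card_insert_empty_powersetCard_one ▸ hlo) (card_powerset S ▸ hhi)
    exact ⟨𝒜, fun A hA => mem_powerset.1 (h𝒜 hA),
      IsBondy.not_of_subset hstar𝒜 IsBondy.not_insert_empty_powersetCard_one, rfl⟩
end

section
/- Let 𝒜 be a system on a finite set S such that κ(𝒜) = 𝒜 and λ₁(𝒜) = S, where λ₁(𝒜) = {a ∈ S : there is exactly one A ∈ 𝒜 with a ∉ A and A ∪ {a} ∈ 𝒜}. Then 𝒜 is an inclusion-minimal non-Bondy system on S. -/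
def kappa {α : Type*} [DecidableEq α] (𝒜 : Finset (Finset α)) : Finset (Finset α) :=
  𝒜.filter fun A => ∃ B ∈ 𝒜, (symmDiff A B).card = 1

lemma symmdiff_one_aux {α : Type*} [DecidableEq α] {a : α} {A B : Finset α}
    (hA : a ∈ A) (hB : a ∉ B)
    (hmem : ∀ x, x ∈ symmDiff A B ↔ x = a) : A = insert a B := by
  ext x
  simp only [Finset.mem_insert]
  constructor
  · intro hx
    by_cases hxB : x ∈ B
    · exact Or.inr hxB
    · exact Or.inl ((hmem x).mp (Finset.mem_symmDiff.mpr (Or.inl ⟨hx, hxB⟩)))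
  · rintro (rfl | hx)
    · exact hA
    · by_contra hxA
      have := (hmem x).mp (Finset.mem_symmDiff.mpr (Or.inr ⟨hx, hxA⟩))
      subst this; exact hB hx

lemma symmdiff_one {α : Type*} [DecidableEq α] {A B : Finset α}
    (h : (symmDiff A B).card = 1) :
    ∃ a, (a ∉ A ∧ B = insert a A) ∨ (a ∉ B ∧ A = insert a B) := by
  obtain ⟨a, ha⟩ := Finset.card_eq_one.mp h
  have hmem : ∀ x, x ∈ symmDiff A B ↔ x = a := by simp [ha]
  have haAB := (hmem a).mpr rfl
  rw [Finset.mem_symmDiff] at haAB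
  rcases haAB with ⟨hA, hB⟩ | ⟨hB, hA⟩
  · exact ⟨a, Or.inr ⟨hB, symmdiff_one_aux hA hB hmem⟩⟩
  · refine ⟨a, Or.inl ⟨hA, symmdiff_one_aux hB hA fun x => ?_⟩⟩
    rw [symmDiff_comm]; exact hmem x

/-- `lam1 S 𝒜 = S` means: for every `a ∈ S` there is exactly one `A ∈ 𝒜`
with `a ∉ A` and `A ∪ {a} ∈ 𝒜`. -/
theorem slender_is_min_nonBondy {α : Type*} [DecidableEq α] (S : Finset α)
    (𝒜 : Finset (Finset α)) (hsub : ∀ A ∈ 𝒜, A ⊆ S)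
    (hk : kappa 𝒜 = 𝒜)
    (hl1 : ∀ a ∈ S, ∃! A, A ∈ 𝒜 ∧ a ∉ A ∧ insert a A ∈ 𝒜) :
    ¬ IsBondy S 𝒜 ∧ ∀ ℬ ⊆ 𝒜, ¬ IsBondy S ℬ → ℬ = 𝒜 := by
  constructor
  · rintro ⟨a, haS, hbondy⟩
    obtain ⟨A, ⟨hA, haA, hins⟩, -⟩ := hl1 a haS
    exact haA (hbondy A hA hins)
  · intro ℬ hBsub hnb
    have key : ∀ a ∈ S, ∃ A, A ∈ ℬ ∧ a ∉ A ∧ insert a A ∈ ℬ := by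
      intro a haS
      by_contra h
      push_neg at h
      refine hnb ⟨a, haS, fun A hA hins => ?_⟩
      by_contra haA
      exact (h A hA haA) hins
    apply Finset.Subset.antisymm hBsub
    intro A hA
    have hA' := hA
    rw [← hk] at hA'
    rw [kappa, Finset.mem_filter] at hA'
    obtain ⟨-, B, hB, hcard⟩ := hA'
    obtain ⟨a, ⟨haA, rfl⟩ | ⟨haB, rfl⟩⟩ := symmdiff_one hcard
    · have haS : a ∈ S := hsub _ hB (Finset.mem_insert_self a A)
      obtain ⟨C, hCℬ, haC, hCins⟩ := key a haS
      obtain ⟨W, -, huniq⟩ := hl1 a haS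
      have h1 : A = W := huniq A ⟨hA, haA, hB⟩
      have h2 : C = W := huniq C ⟨hBsub hCℬ, haC, hBsub hCins⟩
      rw [h1, ← h2]; exact hCℬ
    · have haS : a ∈ S := hsub _ hA (Finset.mem_insert_self a B)
      obtain ⟨C, hCℬ, haC, hCins⟩ := key a haS
      obtain ⟨W, -, huniq⟩ := hl1 a haS
      have h1 : B = W := huniq B ⟨hB, haB, hA⟩
      have h2 : C = W := huniq C ⟨hBsub hCℬ, haC, hBsub hCins⟩
      rw [h1, ← h2]; exact hCins
end

section
/- If 𝒜 is an inclusion-minimal non-Bondy system on a finite set S with |S| = s, then s + 1 ≤ |𝒜| ≤ 2s. -/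
lemma lower_aux {α : Type*} [DecidableEq α] :
    ∀ n (S : Finset α) (𝒜 : Finset (Finset α)), S.card = n → 𝒜.Nonempty →
      (∀ a ∈ S, ∃ A ∈ 𝒜, a ∉ A ∧ insert a A ∈ 𝒜) → S.card + 1 ≤ 𝒜.card := by
  intro n
  induction n with
  | zero => intro S 𝒜 hS hne _; simpa [hS] using Finset.card_pos.2 hne
  | succ n ih =>
    intro S 𝒜 hS hne hw
    obtain ⟨a, ha⟩ : S.Nonempty := Finset.card_pos.1 (by omega)
    obtain ⟨A, hA, haA, hiA⟩ := hw a ha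
    set 𝒜' := 𝒜.image (fun X => X.erase a) with h𝒜'
    have key : (S.erase a).card + 1 ≤ 𝒜'.card := by
      apply ih
      · rw [Finset.card_erase_of_mem ha, hS]; omega
      · exact hne.image _
      · intro b hb
        have hbS := Finset.mem_of_mem_erase hb
        have hba : b ≠ a := Finset.ne_of_mem_erase hb
        obtain ⟨B, hB, hbB, hiB⟩ := hw b hbS
        refine ⟨B.erase a, Finset.mem_image_of_mem _ hB,
          fun h => hbB (Finset.mem_of_mem_erase h), ?_⟩
        have : insert b (B.erase a) = (insert b B).erase a :=
          (Finset.erase_insert_of_ne hba).symm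
        rw [this]
        exact Finset.mem_image_of_mem _ hiB
    have hAne : A ≠ insert a A := by
      intro h; exact haA (h ▸ Finset.mem_insert_self a A)
    have hsub : 𝒜' ⊆ (𝒜.erase (insert a A)).image (fun X => X.erase a) := by
      intro Y hY
      obtain ⟨X, hX, rfl⟩ := Finset.mem_image.1 hY
      by_cases hX' : X = insert a A
      · subst hX'
        rw [Finset.erase_insert haA]
        exact Finset.mem_image.2 ⟨A, Finset.mem_erase.2 ⟨hAne, hA⟩,
          Finset.erase_eq_of_notMem haA⟩
      · exact Finset.mem_image_of_mem _ (Finset.mem_erase.2 ⟨hX', hX⟩)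
    have h1 : 𝒜'.card < 𝒜.card :=
      calc 𝒜'.card ≤ ((𝒜.erase (insert a A)).image (fun X => X.erase a)).card :=
            Finset.card_le_card hsub
        _ ≤ (𝒜.erase (insert a A)).card := Finset.card_image_le
        _ < 𝒜.card := Finset.card_erase_lt_of_mem hiA
    rw [Finset.card_erase_of_mem ha, hS] at key
    omega

theorem min_nonBondy_card_bounds {α : Type*} [DecidableEq α] (S : Finset α)
    (𝒜 : Finset (Finset α)) (hs : 1 ≤ S.card) (hsub : ∀ A ∈ 𝒜, A ⊆ S)
    (hnb : ¬ IsBondy S 𝒜) (hmin : ∀ ℬ ⊆ 𝒜, ¬ IsBondy S ℬ → ℬ = 𝒜) :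
    S.card + 1 ≤ 𝒜.card ∧ 𝒜.card ≤ 2 * S.card := by
  unfold IsBondy at hnb
  push_neg at hnb
  -- hnb : ∀ a ∈ S, ∃ A ∈ 𝒜, insert a A ∈ 𝒜 ∧ a ∉ A
  obtain ⟨a0, ha0⟩ : S.Nonempty := Finset.card_pos.1 hs
  obtain ⟨A0, hA0, _⟩ := hnb a0 ha0
  have hne : 𝒜.Nonempty := ⟨A0, hA0⟩
  constructor
  · exact lower_aux S.card S 𝒜 rfl hne (fun a ha => by
      obtain ⟨A, hA, hiA, haA⟩ := hnb a ha
      exact ⟨A, hA, haA, hiA⟩)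
  · have hw : ∀ a, ∃ A, a ∈ S → A ∈ 𝒜 ∧ insert a A ∈ 𝒜 ∧ a ∉ A := by
      intro a
      by_cases h : a ∈ S
      · obtain ⟨A, hA, hiA, haA⟩ := hnb a h
        exact ⟨A, fun _ => ⟨hA, hiA, haA⟩⟩
      · exact ⟨∅, fun h' => absurd h' h⟩
    choose f hf using hw
    set ℬ : Finset (Finset α) := S.biUnion (fun a => {f a, insert a (f a)}) with hℬ
    have hBsub : ℬ ⊆ 𝒜 := by
      intro X hX
      obtain ⟨a, ha, hX⟩ := Finset.mem_biUnion.1 hX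
      rcases Finset.mem_insert.1 hX with h | h
      · exact h ▸ (hf a ha).1
      · exact (Finset.mem_singleton.1 h) ▸ (hf a ha).2.1
    have hBnb : ¬ IsBondy S ℬ := by
      rintro ⟨a, ha, h⟩
      refine (hf a ha).2.2 (h (f a) ?_ ?_)
      · exact Finset.mem_biUnion.2 ⟨a, ha, Finset.mem_insert_self _ _⟩
      · exact Finset.mem_biUnion.2 ⟨a, ha, Finset.mem_insert.2 (Or.inr (Finset.mem_singleton_self _))⟩
    have hBeq : ℬ = 𝒜 := hmin ℬ hBsub hBnb
    calc 𝒜.card = ℬ.card := by rw [hBeq]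
      _ ≤ ∑ a ∈ S, ({f a, insert a (f a)} : Finset (Finset α)).card :=
          Finset.card_biUnion_le
      _ ≤ ∑ a ∈ S, 2 := Finset.sum_le_sum (fun a _ =>
          le_trans (Finset.card_insert_le _ _) (by simp))
      _ = 2 * S.card := by rw [Finset.sum_const, smul_eq_mul, mul_comm]
end

section
/- Let S₁ and S₂ be disjoint finite sets and let 𝒜ᵢ be inclusion-minimal non-Bondy systems on Sᵢ (i = 1,2) with ∅ ∉ 𝒜ᵢ. Then 𝒜 = 𝒜₁ ∪ 𝒜₂ is an inclusion-minimal non-Bondy system on S = S₁ ∪ S₂, with |𝒜| = |𝒜₁| + |𝒜₂|. -/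
theorem union_min_nonBondy {α : Type*} [DecidableEq α] (S₁ S₂ : Finset α)
    (hdisj : Disjoint S₁ S₂) (hS₁ : S₁.Nonempty) (hS₂ : S₂.Nonempty)
    (𝒜₁ 𝒜₂ : Finset (Finset α))
    (hsub₁ : ∀ A ∈ 𝒜₁, A ⊆ S₁) (hsub₂ : ∀ A ∈ 𝒜₂, A ⊆ S₂)
    (he₁ : ∅ ∉ 𝒜₁) (he₂ : ∅ ∉ 𝒜₂)
    (hnb₁ : ¬ IsBondy S₁ 𝒜₁) (hmin₁ : ∀ ℬ ⊆ 𝒜₁, ¬ IsBondy S₁ ℬ → ℬ = 𝒜₁)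
    (hnb₂ : ¬ IsBondy S₂ 𝒜₂) (hmin₂ : ∀ ℬ ⊆ 𝒜₂, ¬ IsBondy S₂ ℬ → ℬ = 𝒜₂) :
    ¬ IsBondy (S₁ ∪ S₂) (𝒜₁ ∪ 𝒜₂) ∧
      (∀ ℬ ⊆ 𝒜₁ ∪ 𝒜₂, ¬ IsBondy (S₁ ∪ S₂) ℬ → ℬ = 𝒜₁ ∪ 𝒜₂) ∧
      (𝒜₁ ∪ 𝒜₂).card = 𝒜₁.card + 𝒜₂.card := by
  have hAdisj : Disjoint 𝒜₁ 𝒜₂ := by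
    rw [Finset.disjoint_left]
    intro A h1 h2
    have hA : A = ∅ := by
      have := Finset.disjoint_left.mp hdisj
      ext x
      simp only [Finset.notMem_empty, iff_false]
      intro hx
      exact this (hsub₁ A h1 hx) (hsub₂ A h2 hx)
    exact he₁ (hA ▸ h1)
  refine ⟨?_, ?_, Finset.card_union_of_disjoint hAdisj⟩
  · rintro ⟨a, ha, hwit⟩
    rcases Finset.mem_union.mp ha with ha1 | ha2
    · exact hnb₁ ⟨a, ha1, fun A hA hins => hwit A (Finset.mem_union_left _ hA)
        (Finset.mem_union_left _ hins)⟩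
    · exact hnb₂ ⟨a, ha2, fun A hA hins => hwit A (Finset.mem_union_right _ hA)
        (Finset.mem_union_right _ hins)⟩
  · intro ℬ hℬ hnb
    have key : ∀ (a : α), a ∈ S₁ ∪ S₂ → ∃ A ∈ ℬ, insert a A ∈ ℬ ∧ a ∉ A := by
      intro a ha
      by_contra h
      push_neg at h
      exact hnb ⟨a, ha, h⟩
    have h1 : ℬ ∩ 𝒜₁ = 𝒜₁ := by
      apply hmin₁ _ (Finset.inter_subset_right)
      rintro ⟨a, ha, hwit⟩
      obtain ⟨A, hAB, hins, hna⟩ := key a (Finset.mem_union_left _ ha)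
      -- insert a A ∈ ℬ ⊆ 𝒜₁ ∪ 𝒜₂; since a ∈ S₁, insert a A ∉ 𝒜₂
      have hins' : insert a A ∈ 𝒜₁ := by
        rcases Finset.mem_union.mp (hℬ hins) with h | h
        · exact h
        · exact absurd (hsub₂ _ h (Finset.mem_insert_self a A))
            (Finset.disjoint_left.mp hdisj ha)
      have hA1 : A ∈ 𝒜₁ := by
        rcases Finset.mem_union.mp (hℬ hAB) with h | h
        · exact h
        · -- A ∈ 𝒜₂, but A ⊆ insert a A ⊆ S₁, so A = ∅
          exfalso
          have hA : A = ∅ := by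
            ext x
            simp only [Finset.notMem_empty, iff_false]
            intro hx
            exact Finset.disjoint_left.mp hdisj
              (hsub₁ _ hins' (Finset.mem_insert_of_mem hx)) (hsub₂ A h hx)
          exact he₂ (hA ▸ h)
      exact hna (hwit A (Finset.mem_inter.mpr ⟨hAB, hA1⟩)
        (Finset.mem_inter.mpr ⟨hins, hins'⟩))
    have h2 : ℬ ∩ 𝒜₂ = 𝒜₂ := by
      apply hmin₂ _ (Finset.inter_subset_right)
      rintro ⟨a, ha, hwit⟩
      obtain ⟨A, hAB, hins, hna⟩ := key a (Finset.mem_union_right _ ha)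
      have hins' : insert a A ∈ 𝒜₂ := by
        rcases Finset.mem_union.mp (hℬ hins) with h | h
        · exact absurd (hsub₁ _ h (Finset.mem_insert_self a A))
            (Finset.disjoint_right.mp hdisj ha)
        · exact h
      have hA2 : A ∈ 𝒜₂ := by
        rcases Finset.mem_union.mp (hℬ hAB) with h | h
        · exfalso
          have hA : A = ∅ := by
            ext x
            simp only [Finset.notMem_empty, iff_false]
            intro hx
            exact Finset.disjoint_left.mp hdisj (hsub₁ A h hx)
              (hsub₂ _ hins' (Finset.mem_insert_of_mem hx))
          exact he₁ (hA ▸ h)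
        · exact h
      exact hna (hwit A (Finset.mem_inter.mpr ⟨hAB, hA2⟩)
        (Finset.mem_inter.mpr ⟨hins, hins'⟩))
    apply Finset.Subset.antisymm hℬ
    intro A hA
    rcases Finset.mem_union.mp hA with h | h
    · exact Finset.mem_of_mem_inter_left (h1 ▸ h)
    · exact Finset.mem_of_mem_inter_left (h2 ▸ h)
end

section
/- Let 𝒜 be an inclusion-minimal non-Bondy system on a finite set S, let A ∈ 𝒜, and let w ∉ S. Then ℬ = 𝒜 ∪ {A ∪ {w}} is an inclusion-minimal non-Bondy system on T = S ∪ {w}, with |ℬ| = |𝒜| + 1. -/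
theorem extend_min_nonBondy {α : Type*} [DecidableEq α] (S : Finset α)
    (𝒜 : Finset (Finset α)) (hsub : ∀ X ∈ 𝒜, X ⊆ S)
    (hnb : ¬ IsBondy S 𝒜) (hmin : ∀ ℬ ⊆ 𝒜, ¬ IsBondy S ℬ → ℬ = 𝒜)
    (A : Finset α) (hA : A ∈ 𝒜) (w : α) (hw : w ∉ S) :
    ¬ IsBondy (insert w S) (insert (insert w A) 𝒜) ∧
      (∀ 𝒞 ⊆ insert (insert w A) 𝒜, ¬ IsBondy (insert w S) 𝒞 →
        𝒞 = insert (insert w A) 𝒜) ∧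
      (insert (insert w A) 𝒜).card = 𝒜.card + 1 := by
  have hwX : ∀ X ∈ 𝒜, w ∉ X := fun X hX hwx => hw (hsub X hX hwx)
  have hwA : insert w A ∉ 𝒜 := fun h => hwX _ h (Finset.mem_insert_self w A)
  unfold IsBondy at hnb
  push_neg at hnb
  refine ⟨?_, ?_, ?_⟩
  · rintro ⟨a, ha, hP⟩
    rcases Finset.mem_insert.1 ha with rfl | haS
    · exact hwX A hA (hP A (Finset.mem_insert_of_mem hA) (Finset.mem_insert_self _ _))
    · obtain ⟨X, hX, hXi, hax⟩ := hnb a haS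
      exact hax (hP X (Finset.mem_insert_of_mem hX) (Finset.mem_insert_of_mem hXi))
  · intro 𝒞 h𝒞 hnb𝒞
    unfold IsBondy at hnb𝒞
    push_neg at hnb𝒞
    have key : ¬ IsBondy S (𝒞 ∩ 𝒜) := by
      rintro ⟨a, haS, hP⟩
      have haw : a ≠ w := fun h => hw (h ▸ haS)
      obtain ⟨X, hX, hXi, hax⟩ := hnb𝒞 a (Finset.mem_insert_of_mem haS)
      have hX𝒜 : X ∈ 𝒜 := by
        rcases Finset.mem_insert.1 (h𝒞 hX) with h | h
        · exfalso
          subst h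
          rcases Finset.mem_insert.1 (h𝒞 hXi) with h2 | h2
          · exact hax (h2 ▸ Finset.mem_insert_self a _)
          · exact hw (hsub _ h2
              (Finset.mem_insert_of_mem (Finset.mem_insert_self w A)))
        · exact h
      have hXi𝒜 : insert a X ∈ 𝒜 := by
        rcases Finset.mem_insert.1 (h𝒞 hXi) with h | h
        · exfalso
          have hwmem : w ∈ insert a X := h ▸ Finset.mem_insert_self w A
          rcases Finset.mem_insert.1 hwmem with h3 | h3
          · exact haw h3.symm
          · exact hwX X hX𝒜 h3
        · exact h
      exact hax (hP X (Finset.mem_inter.2 ⟨hX, hX𝒜⟩)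
        (Finset.mem_inter.2 ⟨hXi, hXi𝒜⟩))
    have heq : 𝒞 ∩ 𝒜 = 𝒜 := hmin _ Finset.inter_subset_right key
    have h𝒜𝒞 : 𝒜 ⊆ 𝒞 := heq ▸ Finset.inter_subset_left
    obtain ⟨X, hX, hXi, hax⟩ := hnb𝒞 w (Finset.mem_insert_self w S)
    have hwA𝒞 : insert w A ∈ 𝒞 := by
      rcases Finset.mem_insert.1 (h𝒞 hXi) with h | h
      · exact h ▸ hXi
      · exact absurd (Finset.mem_insert_self w X) (hwX _ h)
    refine Finset.Subset.antisymm h𝒞 (fun Y hY => ?_)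
    rcases Finset.mem_insert.1 hY with rfl | h
    · exact hwA𝒞
    · exact h𝒜𝒞 h
  · exact Finset.card_insert_of_notMem hwA
end

section
/- Let S be a finite set with |S| = s ≥ 6. For a non-negative integer t, there exists an inclusion-minimal non-Bondy system 𝒜 on S with |𝒜| = t if and only if s + 1 ≤ t ≤ 2s. -/
open Finset

section Bondy

variable {α : Type*} [DecidableEq α] {S : Finset α} {𝒜 ℬ : Finset (Finset α)}

theorem not_isBondy_iff :
    ¬ IsBondy S 𝒜 ↔ ∀ a ∈ S, ∃ A ∈ 𝒜, a ∉ A ∧ insert a A ∈ 𝒜 := by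
  simp only [IsBondy, not_exists, not_and, not_forall]
  exact forall₂_congr fun a _ => exists_congr fun A => by tauto

theorem eq_of_subset_of_not_isBondy
    (h : ∀ B ∈ 𝒜, ∃ a ∈ S, ∀ A ∈ 𝒜, a ∉ A → insert a A ∈ 𝒜 → B = A ∨ B = insert a A)
    (hℬ : ℬ ⊆ 𝒜) (hnb : ¬ IsBondy S ℬ) : ℬ = 𝒜 := by
  by_contra hne
  obtain ⟨B, hB, hBℬ⟩ := exists_of_ssubset (ssubset_of_subset_of_ne hℬ hne)
  obtain ⟨a, ha, hcrit⟩ := h B hB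
  refine hnb ⟨a, ha, fun A hA hins => by_contra fun haA => ?_⟩
  rcases hcrit A (hℬ hA) haA (hℬ hins) with rfl | rfl
  exacts [hBℬ hA, hBℬ hins]

theorem card_add_one_le_of_not_isBondy (hS : S.Nonempty) (h : ¬ IsBondy S 𝒜) :
    #S + 1 ≤ #𝒜 := by
  rw [not_isBondy_iff] at h
  let v : Finset α → S → ℚ := fun A i => if (i : α) ∈ A then 1 else 0
  have hspan : vectorSpan ℚ (𝒜.image v : Set (S → ℚ)) = ⊤ := by
    refine eq_top_iff.2 ((Pi.basisFun ℚ S).span_eq ▸ Submodule.span_le.2 ?_)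
    rintro _ ⟨i, rfl⟩
    obtain ⟨A, hA, hiA, hiA'⟩ := h i i.2
    have : Pi.basisFun ℚ S i = v (insert (i : α) A) -ᵥ v A := by
      ext j
      by_cases hj : j = i
      · subst hj; simp [v, hiA]
      · simp [v, hj]
    rw [this]
    exact vsub_mem_vectorSpan ℚ (by simpa using ⟨_, hiA', rfl⟩) (by simpa using ⟨_, hA, rfl⟩)
  obtain ⟨a, ha⟩ := hS
  obtain ⟨A, hA, -⟩ := h a ha
  obtain ⟨n, hn⟩ := Nat.exists_eq_add_of_lt (card_pos.2 ⟨A, hA⟩)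
  have := finrank_vectorSpan_image_finset_le ℚ v 𝒜 (n := n) (by omega)
  rw [hspan, finrank_top, Module.finrank_fintype_fun_eq_card, Fintype.card_coe] at this
  omega

theorem exists_subset_card_le_not_isBondy (h : ¬ IsBondy S 𝒜) :
    ∃ ℬ ⊆ 𝒜, #ℬ ≤ 2 * #S ∧ ¬ IsBondy S ℬ := by
  rw [not_isBondy_iff] at h
  choose! A hA haA hins using h
  refine ⟨S.biUnion fun a => {A a, insert a (A a)}, ?_, ?_, ?_⟩
  · simp only [biUnion_subset, insert_subset_iff, singleton_subset_iff]
    exact fun a ha => ⟨hA a ha, hins a ha⟩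
  · rw [mul_comm]
    exact card_biUnion_le_card_mul _ _ _ fun a _ => card_le_two
  · exact not_isBondy_iff.2 fun a ha =>
      ⟨A a, mem_biUnion.2 ⟨a, ha, by simp⟩, haA a ha, mem_biUnion.2 ⟨a, ha, by simp⟩⟩

theorem card_le_two_mul_of_minimal (hnb : ¬ IsBondy S 𝒜)
    (hmin : ∀ ℬ ⊆ 𝒜, ¬ IsBondy S ℬ → ℬ = 𝒜) : #𝒜 ≤ 2 * #S := by
  obtain ⟨ℬ, hℬ, hcard, hℬnb⟩ := exists_subset_card_le_not_isBondy hnb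
  exact hmin ℬ hℬ hℬnb ▸ hcard

section StarPairFamily

variable {ι : Type*} {I : Finset ι} {x : ι ↪ α} {D : ι → Finset α} {k : ℕ}

variable (S I x D) in
def starPairFamily : Finset (Finset α) :=
  insert ∅ ((S \ I.map x).image singleton ∪ I.image D ∪ I.image fun i => insert (x i) (D i))

theorem mem_starPairFamily {A : Finset α} :
    A ∈ starPairFamily S I x D ↔ ∅ = A ∨ (∃ b ∈ S, b ∉ I.map x ∧ {b} = A) ∨
      (∃ i ∈ I, D i = A) ∨ ∃ i ∈ I, insert (x i) (D i) = A := by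
  simp only [starPairFamily, mem_insert, mem_union, mem_image, mem_sdiff, and_assoc, or_assoc,
    eq_comm (b := A)]

theorem subset_of_mem_starPairFamily (hx : ∀ i, x i ∈ S) (hDS : ∀ i, D i ⊆ S) {A : Finset α}
    (hA : A ∈ starPairFamily S I x D) : A ⊆ S := by
  rcases mem_starPairFamily.1 hA with rfl | ⟨b, hb, -, rfl⟩ | ⟨i, -, rfl⟩ | ⟨i, -, rfl⟩
  · exact empty_subset S
  · exact singleton_subset_iff.2 hb
  · exact hDS i
  · exact insert_subset (hx i) (hDS i)

theorem starPairFamily_edge (hk : 2 < k) (hDk : ∀ i, #(D i) = k) (hxD : ∀ i, x i ∉ D i)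
    (hDT : ∀ i j, D i ⊆ insert (x j) (D j) → i = j) {A : Finset α} {a : α}
    (hA : A ∈ starPairFamily S I x D) (ha : a ∉ A) (hins : insert a A ∈ starPairFamily S I x D) :
    (A = ∅ ∧ a ∈ S ∧ a ∉ I.map x) ∨ ∃ i ∈ I, A = D i ∧ a = x i := by
  have hTk : ∀ i, #(insert (x i) (D i)) = k + 1 := fun i => by
    rw [card_insert_of_notMem (hxD i), hDk]
  have hcard := card_insert_of_notMem ha
  rcases mem_starPairFamily.1 hA with rfl | ⟨b, -, -, rfl⟩ | ⟨i, hi, rfl⟩ | ⟨i, -, rfl⟩ <;>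
    rcases mem_starPairFamily.1 hins with h | ⟨c, hc, hcx, h⟩ | ⟨j, -, h⟩ | ⟨j, -, h⟩ <;>
    rw [← h] at hcard <;> simp only [hDk, hTk, card_singleton, card_empty] at hcard <;> try omega
  · left
    obtain rfl : c = a := singleton_injective h
    exact ⟨rfl, hc, hcx⟩
  · obtain rfl := hDT i j (h ▸ subset_insert a (D i))
    refine Or.inr ⟨i, hi, rfl, ?_⟩
    have : a ∈ insert (x i) (D i) := h ▸ mem_insert_self a (D i)
    exact (mem_insert.1 this).resolve_right ha

theorem not_isBondy_starPairFamily (hxD : ∀ i, x i ∉ D i) :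
    ¬ IsBondy S (starPairFamily S I x D) := by
  refine not_isBondy_iff.2 fun a ha => ?_
  by_cases haI : a ∈ I.map x
  · obtain ⟨i, hi, rfl⟩ := mem_map.1 haI
    exact ⟨D i, mem_starPairFamily.2 (Or.inr (Or.inr (Or.inl ⟨i, hi, rfl⟩))), hxD i,
      mem_starPairFamily.2 (Or.inr (Or.inr (Or.inr ⟨i, hi, rfl⟩)))⟩
  · exact ⟨∅, mem_starPairFamily.2 (Or.inl rfl), notMem_empty a,
      mem_starPairFamily.2 (Or.inr (Or.inl ⟨a, ha, haI, rfl⟩))⟩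

theorem eq_starPairFamily_of_not_isBondy (hx : ∀ i, x i ∈ S) (hk : 2 < k) (hDk : ∀ i, #(D i) = k)
    (hxD : ∀ i, x i ∉ D i) (hDT : ∀ i j, D i ⊆ insert (x j) (D j) → i = j) (hI : #I < #S)
    (hℬ : ℬ ⊆ starPairFamily S I x D) (hnb : ¬ IsBondy S ℬ) : ℬ = starPairFamily S I x D := by
  refine eq_of_subset_of_not_isBondy (fun B hB => ?_) hℬ hnb
  have edge := fun {A a} => starPairFamily_edge (S := S) (I := I) hk hDk hxD hDT (A := A) (a := a)
  rcases mem_starPairFamily.1 hB with rfl | ⟨b, hb, hbI, rfl⟩ | ⟨i, hi, rfl⟩ | ⟨i, hi, rfl⟩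
  · obtain ⟨b, hb, hbI⟩ : ∃ b ∈ S, b ∉ I.map x :=
      exists_mem_notMem_of_card_lt_card (by rwa [card_map])
    refine ⟨b, hb, fun A hA hbA hins => ?_⟩
    rcases edge hA hbA hins with ⟨rfl, -⟩ | ⟨i, hi, -, rfl⟩
    · exact Or.inl rfl
    · exact absurd (mem_map_of_mem x hi) hbI
  · refine ⟨b, hb, fun A hA hbA hins => ?_⟩
    rcases edge hA hbA hins with ⟨rfl, -⟩ | ⟨i, hi, -, rfl⟩
    · exact Or.inr rfl
    · exact absurd (mem_map_of_mem x hi) hbI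
  all_goals
    refine ⟨x i, hx i, fun A hA hxA hins => ?_⟩
    rcases edge hA hxA hins with ⟨-, -, hxI⟩ | ⟨j, -, rfl, hij⟩
    · exact absurd (mem_map_of_mem x hi) hxI
    · obtain rfl := x.injective hij
      simp

theorem card_starPairFamily (hx : ∀ i, x i ∈ S) (hk : 2 < k) (hDk : ∀ i, #(D i) = k)
    (hxD : ∀ i, x i ∉ D i) (hDT : ∀ i j, D i ⊆ insert (x j) (D j) → i = j) :
    #(starPairFamily S I x D) = #S + 1 + #I := by
  have hTk : ∀ i, #(insert (x i) (D i)) = k + 1 := fun i => by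
    rw [card_insert_of_notMem (hxD i), hDk]
  have disjoint_of_card : ∀ {𝒳 𝒴 : Finset (Finset α)} (c : ℕ), (∀ A ∈ 𝒳, #A < c) →
      (∀ B ∈ 𝒴, c ≤ #B) → Disjoint 𝒳 𝒴 :=
    fun c h𝒳 h𝒴 => disjoint_left.2 fun A hA hA' => (h𝒳 A hA).not_ge (h𝒴 A hA')
  have hIS : I.map x ⊆ S := fun a ha => by obtain ⟨i, -, rfl⟩ := mem_map.1 ha; exact hx i
  have hmap := card_le_card hIS
  rw [card_map] at hmap
  rw [starPairFamily, card_insert_of_notMem, card_union_of_disjoint, card_union_of_disjoint,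
    card_image_of_injective _ singleton_injective, card_sdiff_of_subset hIS, card_map,
    card_image_of_injOn, card_image_of_injOn]
  · omega
  · exact fun i _ j _ h => hDT i j (h ▸ subset_insert _ _)
  · exact fun i _ j _ h => hDT i j (h ▸ subset_insert _ _)
  · exact disjoint_of_card 2 (forall_mem_image.2 fun _ _ => by simp)
      (forall_mem_image.2 fun i _ => by rw [hDk]; omega)
  · refine disjoint_of_card (k + 1) (forall_mem_union.2 ⟨?_, ?_⟩)
      (forall_mem_image.2 fun i _ => (hTk i).ge)
    · exact forall_mem_image.2 fun _ _ => by rw [card_singleton]; omega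
    · exact forall_mem_image.2 fun i _ => by rw [hDk]; omega
  · refine disjoint_left.1 (disjoint_of_card (𝒳 := {∅}) 1 (by simp) ?_) (mem_singleton_self ∅)
    refine forall_mem_union.2 ⟨forall_mem_union.2 ⟨?_, ?_⟩, ?_⟩ <;>
      refine forall_mem_image.2 fun i _ => ?_
    · simp
    · rw [hDk]; omega
    · rw [hTk]; omega

end StarPairFamily

end Bondy

theorem ZMod.natCast_eq_natCast_iff_of_lt {n a b : ℕ} (ha : a < n) (hb : b < n) :
    (a : ZMod n) = b ↔ a = b := by
  rw [ZMod.natCast_eq_natCast_iff', Nat.mod_eq_of_lt ha, Nat.mod_eq_of_lt hb]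

section Cyclic

variable {n : ℕ}

def cyclicTriple (i : ZMod n) : Finset (ZMod n) := {i + 1, i + 2, i + 4}

theorem card_insert_cyclicTriple (hn : 4 < n) (i : ZMod n) :
    #(insert i (cyclicTriple i)) = 4 := by
  have : insert i (cyclicTriple i) = ({0, 1, 2, 4} : Finset ℕ).image fun a : ℕ => i + a := by
    simp [cyclicTriple]
  rw [this, card_image_of_injOn]
  · rfl
  intro a ha b hb hab
  simp only [coe_insert, coe_singleton, Set.mem_insert_iff, Set.mem_singleton_iff] at ha hb
  exact (ZMod.natCast_eq_natCast_iff_of_lt (by omega) (by omega)).1 (add_left_cancel hab)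

theorem self_notMem_cyclicTriple (hn : 4 < n) (i : ZMod n) : i ∉ cyclicTriple i := fun h => by
  have := card_insert_cyclicTriple hn i
  rw [insert_eq_of_mem h] at this
  have : #(cyclicTriple i) ≤ 3 := card_le_three
  omega

theorem card_cyclicTriple (hn : 4 < n) (i : ZMod n) : #(cyclicTriple i) = 3 := by
  have := card_insert_cyclicTriple hn i
  rw [card_insert_of_notMem (self_notMem_cyclicTriple hn i)] at this
  omega

/-- Writing `d = i - j`, the hypothesis says `d + {1, 2, 4} ⊆ {0, 1, 2, 4}`; as
`3, 5 ∉ {0, 1, 2, 4}` in `ZMod n` for `n ≥ 6`, the value of `d + 1` leaves only `d = 0`. -/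
theorem eq_of_cyclicTriple_subset (hn : 6 ≤ n) {i j : ZMod n}
    (h : cyclicTriple i ⊆ insert j (cyclicTriple j)) : i = j := by
  let P : Finset (ZMod n) := ({0, 1, 2, 4} : Finset ℕ).image Nat.cast
  have notMem_P : ∀ a : ℕ, a < n → a ∉ ({0, 1, 2, 4} : Finset ℕ) → (a : ZMod n) ∉ P := by
    intro a ha haP hmem
    obtain ⟨b, hb, hba⟩ := mem_image.1 hmem
    have : b < n := by simp only [mem_insert, mem_singleton] at hb; omega
    exact haP ((ZMod.natCast_eq_natCast_iff_of_lt this ha).1 hba ▸ hb)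
  have three : (3 : ZMod n) ∉ P := by simpa using notMem_P 3 (by omega) (by decide)
  have five : (5 : ZMod n) ∉ P := by simpa using notMem_P 5 (by omega) (by decide)
  have mem_P : ∀ c, i + c ∈ cyclicTriple i → i - j + c ∈ P := by
    intro c hc
    have hT : insert j (cyclicTriple j) = P.image (j + ·) := by simp [cyclicTriple, P]
    obtain ⟨p, hp, hpc⟩ := mem_image.1 (hT ▸ h hc)
    exact (by linear_combination hpc : p = i - j + c) ▸ hp
  have h1 := mem_P 1 (by simp [cyclicTriple])
  have h2 := mem_P 2 (by simp [cyclicTriple])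
  have h4 := mem_P 4 (by simp [cyclicTriple])
  have h1 : i - j + 1 = 0 ∨ i - j = 0 ∨ i - j + 1 = 2 ∨ i - j + 1 = 4 := by simpa [P] using h1
  rw [← sub_eq_zero]
  rcases h1 with h | h | h | h
  · exact absurd ((by linear_combination h : i - j + 4 = 3) ▸ h4) three
  · linear_combination h
  · exact absurd ((by linear_combination h : i - j + 2 = 3) ▸ h2) three
  · exact absurd ((by linear_combination h : i - j + 2 = 5) ▸ h2) five

end Cyclic

theorem exists_minimal_not_isBondy_card_eq {α : Type*} [DecidableEq α] {S : Finset α}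
    (hs : 6 ≤ #S) {m : ℕ} (hm : m < #S) :
    ∃ 𝒜 : Finset (Finset α), (∀ A ∈ 𝒜, A ⊆ S) ∧ ¬ IsBondy S 𝒜 ∧
      (∀ ℬ ⊆ 𝒜, ¬ IsBondy S ℬ → ℬ = 𝒜) ∧ #𝒜 = #S + 1 + m := by
  have : NeZero #S := ⟨by omega⟩
  obtain ⟨e⟩ : Nonempty (ZMod #S ≃ S) := Fintype.card_eq.1 (by simp [ZMod.card])
  let x : ZMod #S ↪ α := e.toEmbedding.trans (Function.Embedding.subtype _)
  let D : ZMod #S → Finset α := fun i => (cyclicTriple i).map x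
  have hx : ∀ i, x i ∈ S := fun i => (e i).2
  have hDS : ∀ i, D i ⊆ S := fun i a ha => by
    obtain ⟨j, -, rfl⟩ := mem_map.1 ha
    exact hx j
  have hDk : ∀ i, #(D i) = 3 := fun i => by rw [card_map, card_cyclicTriple (by omega)]
  have hxD : ∀ i, x i ∉ D i := fun i => by
    rw [mem_map']
    exact self_notMem_cyclicTriple (by omega) i
  have hDT : ∀ i j, D i ⊆ insert (x j) (D j) → i = j := fun i j h =>
    eq_of_cyclicTriple_subset hs (by rwa [← map_insert, map_subset_map] at h)
  obtain ⟨I, -, hI⟩ := exists_subset_card_eq (s := (univ : Finset (ZMod #S))) (n := m)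
    (by rw [card_univ, ZMod.card]; omega)
  refine ⟨starPairFamily S I x D, fun A => subset_of_mem_starPairFamily hx hDS,
    not_isBondy_starPairFamily hxD,
    fun ℬ => eq_starPairFamily_of_not_isBondy hx (by norm_num) hDk hxD hDT (hI ▸ hm),
    by rw [card_starPairFamily hx (by norm_num) hDk hxD hDT, hI]⟩

theorem min_nonBondy_card_iff {α : Type*} [DecidableEq α] (S : Finset α)
    (hs : 6 ≤ S.card) (t : ℕ) :
    (∃ 𝒜 : Finset (Finset α), (∀ A ∈ 𝒜, A ⊆ S) ∧ ¬ IsBondy S 𝒜 ∧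
        (∀ ℬ ⊆ 𝒜, ¬ IsBondy S ℬ → ℬ = 𝒜) ∧ 𝒜.card = t) ↔
      S.card + 1 ≤ t ∧ t ≤ 2 * S.card := by
  constructor
  · rintro ⟨𝒜, -, hnb, hmin, rfl⟩
    exact ⟨card_add_one_le_of_not_isBondy (card_pos.1 (by omega)) hnb,
      card_le_two_mul_of_minimal hnb hmin⟩
  · rintro ⟨hlow, hup⟩
    obtain ⟨𝒜, hS, hnb, hmin, hcard⟩ :=
      exists_minimal_not_isBondy_card_eq hs (m := t - #S - 1) (by omega)
    exact ⟨𝒜, hS, hnb, hmin, by omega⟩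
end
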